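/- arXiv:2601.07959 — 6 statements merged into one kernel-verified Lean document; each statement's English description precedes it below -/
import Mathlib

section
/- Let A be a stable matching instance and B obtained from A by permuting the preference list of exactly one firm f (all other agents unchanged). If M1 and M2 are matchings stable under A but not under B, then their join M1 ∨_A M2 (each worker gets its less preferred partner) is also not stable under B. Hence M_A \ M_B is a join semi-sublattice of L_A. -/
/-!
Changing the list of the single firm `f0` can only create blocking pairs through `f0`, so each
`Mi` has a `B`-blocking pair `(wi, f0)`. In the join `Mj`, the firm `f0` keeps the partner it has
in `M1` or in `M2`, say in `Mi`, while every worker is matched no better than in `Mi`; hence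
`(wi, f0)` still blocks `Mj` under `B`.
-/

/-- A stable matching instance: each worker `w` ranks firms via `wr w` (lower rank =
more preferred, rank = position in the preference list) and each firm `f` ranks
workers via `fr f`. -/
structure SMInstance (W F : Type) where
  wr : W → F → ℕ
  fr : F → W → ℕ
  wr_inj : ∀ w, Function.Injective (wr w)
  fr_inj : ∀ f, Function.Injective (fr f)

variable {W F : Type}

/-- `(w, f)` is a blocking pair for the matching `M` under instance `A`. -/
def SMInstance.Blocking (A : SMInstance W F) (M : W ≃ F) (w : W) (f : F) : Prop :=
  M w ≠ f ∧ A.wr w f < A.wr w (M w) ∧ A.fr f w < A.fr f (M.symm f)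

/-- `M` is stable under `A`: it has no blocking pair. -/
def SMInstance.Stable (A : SMInstance W F) (M : W ≃ F) : Prop :=
  ∀ w f, ¬ A.Blocking M w f

/-- Pointwise "less preferred partner" (join) of two matchings, w.r.t. the worker
preferences of `A`. -/
def worse (A : SMInstance W F) (M1 M2 : W ≃ F) (w : W) : F :=
  if A.wr w (M1 w) ≤ A.wr w (M2 w) then M2 w else M1 w

/-- Pointwise "more preferred partner" (meet) of two matchings, w.r.t. the worker
preferences of `A`. -/
def better (A : SMInstance W F) (M1 M2 : W ≃ F) (w : W) : F :=
  if A.wr w (M1 w) ≤ A.wr w (M2 w) then M1 w else M2 w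

namespace SMInstance

theorem exists_blocking_at_of_stable_of_not_stable {A B : SMInstance W F} (hW : A.wr = B.wr)
    {f0 : F} (hf : ∀ f, f ≠ f0 → A.fr f = B.fr f) {M : W ≃ F}
    (hA : A.Stable M) (hB : ¬ B.Stable M) : ∃ w, B.Blocking M w f0 := by
  simp only [Stable, not_forall, not_not] at hB
  obtain ⟨w, f, hne, hwr, hfr⟩ := hB
  by_cases hf0 : f = f0
  · exact ⟨w, hf0 ▸ ⟨hne, hwr, hfr⟩⟩
  · exact absurd ⟨hne, hW ▸ hwr, hf f hf0 ▸ hfr⟩ (hA w f)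

theorem Blocking.mono {A : SMInstance W F} {M M' : W ≃ F} {w : W} {f : F}
    (h : A.Blocking M w f) (hle : A.wr w (M w) ≤ A.wr w (M' w)) (hpartner : M.symm f = M'.symm f) :
    A.Blocking M' w f := by
  obtain ⟨hne, hwr, hfr⟩ := h
  refine ⟨fun hw => hne ?_, hwr.trans_le hle, hpartner ▸ hfr⟩
  rw [← M'.symm_apply_eq.2 hw.symm, ← hpartner, M.apply_symm_apply]

end SMInstance

theorem worse_eq_left_or_eq_right (A : SMInstance W F) (M1 M2 : W ≃ F) (w : W) :
    worse A M1 M2 w = M1 w ∨ worse A M1 M2 w = M2 w := by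
  unfold worse
  split_ifs
  exacts [Or.inr rfl, Or.inl rfl]

theorem wr_left_le_worse (A : SMInstance W F) (M1 M2 : W ≃ F) (w : W) :
    A.wr w (M1 w) ≤ A.wr w (worse A M1 M2 w) := by
  unfold worse
  split_ifs with h
  exacts [h, le_rfl]

theorem wr_right_le_worse (A : SMInstance W F) (M1 M2 : W ≃ F) (w : W) :
    A.wr w (M2 w) ≤ A.wr w (worse A M1 M2 w) := by
  unfold worse
  split_ifs with h
  exacts [le_rfl, (not_le.1 h).le]

/-- If `B` is obtained from `A` by permuting the preference list of exactly one firm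
`f0`, and `M1, M2` are stable under `A` but not under `B`, then their join w.r.t.
`A` (each worker gets its less preferred partner) is also not stable under `B`;
hence `M_A \ M_B` is a join semi-sublattice of `L_A`. -/
theorem stmt5 (A B : SMInstance W F) (hW : A.wr = B.wr) (f0 : F)
    (hf : ∀ f, f ≠ f0 → A.fr f = B.fr f)
    (M1 M2 : W ≃ F)
    (h1A : A.Stable M1) (h1B : ¬ B.Stable M1)
    (h2A : A.Stable M2) (h2B : ¬ B.Stable M2) :
    ∀ Mj : W ≃ F, (∀ w, Mj w = worse A M1 M2 w) → ¬ B.Stable Mj := by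
  intro Mj hMj hstab
  obtain ⟨w1, hb1⟩ := SMInstance.exists_blocking_at_of_stable_of_not_stable hW hf h1A h1B
  obtain ⟨w2, hb2⟩ := SMInstance.exists_blocking_at_of_stable_of_not_stable hW hf h2A h2B
  have hu : worse A M1 M2 (Mj.symm f0) = f0 := (hMj _).symm.trans (Mj.apply_symm_apply f0)
  rcases worse_eq_left_or_eq_right A M1 M2 (Mj.symm f0) with h | h
  · refine hstab w1 f0 (hb1.mono ?_ (M1.symm_apply_eq.2 (h.symm.trans hu).symm))
    rw [← hW, hMj]
    exact wr_left_le_worse A M1 M2 w1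
  · refine hstab w2 f0 (hb2.mono ?_ (M2.symm_apply_eq.2 (h.symm.trans hu).symm))
    rw [← hW, hMj]
    exact wr_right_le_worse A M1 M2 w2
end

section
/- Let A be a stable matching instance and B obtained from A by moving one worker w upward in one firm f's preference list (an upward shift), all else unchanged. If a perfect matching M is stable under A but not under B, then the unique blocking pair of M under B is (w, f). -/
variable {W F : Type}

/-- `B` is obtained from `A` by an upward shift of worker `w0` in firm `f0`'s
preference list: all other lists are unchanged, the relative order of workers other
than `w0` in `f0`'s list is preserved, and the set of workers above `w0` in `f0`'s
list only shrinks. -/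
def UpShift (A B : SMInstance W F) (w0 : W) (f0 : F) : Prop :=
  B.wr = A.wr ∧ (∀ f, f ≠ f0 → B.fr f = A.fr f) ∧
  (∀ w1 w2, w1 ≠ w0 → w2 ≠ w0 → (B.fr f0 w1 < B.fr f0 w2 ↔ A.fr f0 w1 < A.fr f0 w2)) ∧
  (∀ w', B.fr f0 w' < B.fr f0 w0 → A.fr f0 w' < A.fr f0 w0)

namespace UpShift

variable {A B : SMInstance W F} {w0 : W} {f0 : F}

theorem fr_lt_of_fr_lt (h : UpShift A B w0 f0) {w1 w2 : W} (hw1 : w1 ≠ w0)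
    (hlt : B.fr f0 w1 < B.fr f0 w2) : A.fr f0 w1 < A.fr f0 w2 := by
  obtain ⟨-, -, hord, hup⟩ := h
  by_cases hw2 : w2 = w0
  · subst hw2
    exact hup w1 hlt
  · exact (hord w1 w2 hw1 hw2).mp hlt

theorem blocking_of_blocking (h : UpShift A B w0 f0) {M : W ≃ F} {x : W} {y : F}
    (hxy : B.Blocking M x y) (hne : ¬(x = w0 ∧ y = f0)) : A.Blocking M x y := by
  obtain ⟨hM, hwr, hfr⟩ := hxy
  refine ⟨hM, h.1 ▸ hwr, ?_⟩
  by_cases hy : y = f0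
  · subst hy
    exact h.fr_lt_of_fr_lt (fun hx => hne ⟨hx, rfl⟩) hfr
  · rwa [h.2.1 y hy] at hfr

theorem eq_of_blocking (h : UpShift A B w0 f0) {M : W ≃ F} (hA : A.Stable M) {x : W} {y : F}
    (hxy : B.Blocking M x y) : x = w0 ∧ y = f0 := by
  by_contra hne
  exact hA x y (h.blocking_of_blocking hxy hne)

end UpShift

/-- If `B` is obtained from `A` by an upward shift of worker `w0` in firm `f0`'s
list, and `M` is stable under `A` but not under `B`, then the unique blocking pair
of `M` under `B` is `(w0, f0)`. -/
theorem stmt6 (A B : SMInstance W F) (w0 : W) (f0 : F) (h : UpShift A B w0 f0)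
    (M : W ≃ F) (hA : A.Stable M) (hB : ¬ B.Stable M) :
    B.Blocking M w0 f0 ∧ ∀ x y, B.Blocking M x y → x = w0 ∧ y = f0 := by
  obtain ⟨x, y, hxy⟩ : ∃ x y, B.Blocking M x y := by
    simpa [SMInstance.Stable] using hB
  obtain ⟨rfl, rfl⟩ := h.eq_of_blocking hA hxy
  exact ⟨hxy, fun _ _ => h.eq_of_blocking hA⟩
end

section
/- Let A be a stable matching instance, B obtained from A by shifting worker w up past workers w_1 >_f ... >_f w_k in firm f's list. Then the set M_A \ M_B equals exactly the set of stable matchings of A that match f to one of w_1,...,w_k and match w to a firm strictly below f in w's preference list. -/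
variable {W F : Type}

/-! A pair blocking an `A`-stable matching `M` in `B` must involve the only list that changed,
that of `f0`. Since `f0` still orders the workers other than `w0` as before, the blocking worker
is `w0`, and `f0` now prefers `w0` to its partner `M.symm f0` exactly when that partner is one
of the `ws i` that `w0` jumped over. -/

namespace SMInstance

theorem Stable.fr_symm_lt_of_wr_lt {A : SMInstance W F} {M : W ≃ F} (hA : A.Stable M)
    {w : W} {f : F} (hMw : M w ≠ f) (hlt : A.wr w f < A.wr w (M w)) : A.fr f (M.symm f) < A.fr f w := by
  have hw : M.symm f ≠ w := fun h => hMw (M.symm_apply_eq.mp h).symm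
  exact (not_le.mp fun hle => hA w f ⟨hMw, hlt, hle.lt_of_ne fun h => hw (A.fr_inj f h).symm⟩)

theorem Stable.eq_of_blocking {A B : SMInstance W F} {M : W ≃ F} (hA : A.Stable M) {f0 : F}
    (hwr : B.wr = A.wr) (hfr : ∀ f, f ≠ f0 → B.fr f = A.fr f) {w : W} {f : F}
    (hB : B.Blocking M w f) : f = f0 := by
  by_contra hf
  obtain ⟨hMw, hwlt, hflt⟩ := hB
  exact hA w f ⟨hMw, hwr ▸ hwlt, hfr f hf ▸ hflt⟩

section UpwardShift

variable {A B : SMInstance W F} {M : W ≃ F} {w0 : W} {f0 : F} {k : ℕ} {ws : Fin k → W}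

theorem Stable.eq_of_blocking_shift (hA : A.Stable M) (hwr : B.wr = A.wr)
    (hsame : ∀ w1 w2, w1 ≠ w0 → w2 ≠ w0 →
      (B.fr f0 w1 < B.fr f0 w2 ↔ A.fr f0 w1 < A.fr f0 w2))
    (hshift : ∀ w', B.fr f0 w' < B.fr f0 w0 ↔ (A.fr f0 w' < A.fr f0 w0 ∧ ∀ i, w' ≠ ws i))
    {w : W} (hB : B.Blocking M w f0) : w = w0 := by
  obtain ⟨hMw, hwlt, hflt⟩ := hB
  have hAlt := hA.fr_symm_lt_of_wr_lt hMw (hwr ▸ hwlt)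
  by_contra hw
  by_cases hm : M.symm f0 = w0
  · rw [hm] at hflt hAlt
    exact lt_asymm hAlt ((hshift w).mp hflt).1
  · exact lt_asymm hAlt ((hsame w _ hw hm).mp hflt)

theorem Stable.exists_symm_eq_of_blocking_shift (hA : A.Stable M) (hwr : B.wr = A.wr)
    (hshift : ∀ w', B.fr f0 w' < B.fr f0 w0 ↔ (A.fr f0 w' < A.fr f0 w0 ∧ ∀ i, w' ≠ ws i))
    (hB : B.Blocking M w0 f0) : ∃ i, M.symm f0 = ws i := by
  obtain ⟨hMw, hwlt, hflt⟩ := hB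
  have hAlt := hA.fr_symm_lt_of_wr_lt hMw (hwr ▸ hwlt)
  by_contra! hm
  exact lt_asymm hflt ((hshift _).mpr ⟨hAlt, hm⟩)

theorem blocking_shift_of_symm_eq (hne : ∀ i, ws i ≠ w0) (hwr : B.wr = A.wr)
    (hshift : ∀ w', B.fr f0 w' < B.fr f0 w0 ↔ (A.fr f0 w' < A.fr f0 w0 ∧ ∀ i, w' ≠ ws i))
    {i : Fin k} (hi : M.symm f0 = ws i) (hlt : A.wr w0 f0 < A.wr w0 (M w0)) :
    B.Blocking M w0 f0 := by
  refine ⟨fun h => hne i (hi ▸ M.symm_apply_eq.mpr h.symm), hwr ▸ hlt, ?_⟩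
  have hnot : ¬ B.fr f0 (ws i) < B.fr f0 w0 := fun h => ((hshift _).mp h).2 i rfl
  rw [hi]
  exact (not_lt.mp hnot).lt_of_ne fun h => hne i (B.fr_inj f0 h).symm

end UpwardShift

end SMInstance

theorem stmt7_general (A B : SMInstance W F) (w0 : W) (f0 : F) {k : ℕ} (ws : Fin k → W)
    (hne : ∀ i, ws i ≠ w0)
    (hwr : B.wr = A.wr) (hfr : ∀ f, f ≠ f0 → B.fr f = A.fr f)
    (hsame : ∀ w1 w2, w1 ≠ w0 → w2 ≠ w0 →
      (B.fr f0 w1 < B.fr f0 w2 ↔ A.fr f0 w1 < A.fr f0 w2))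
    -- in `B`, the workers above `w0` are exactly those above `w0` in `A` minus the `ws i`:
    (hshift : ∀ w', B.fr f0 w' < B.fr f0 w0 ↔
      (A.fr f0 w' < A.fr f0 w0 ∧ ∀ i, w' ≠ ws i)) :
    ∀ M : W ≃ F, A.Stable M →
      (¬ B.Stable M ↔ ((∃ i, M.symm f0 = ws i) ∧ A.wr w0 f0 < A.wr w0 (M w0))) := by
  intro M hA
  constructor
  · intro hB
    obtain ⟨w, f, hblock⟩ : ∃ w f, B.Blocking M w f := by
      simpa only [SMInstance.Stable, not_forall, not_not] using hB
    obtain rfl := hA.eq_of_blocking hwr hfr hblock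
    obtain rfl := hA.eq_of_blocking_shift hwr hsame hshift hblock
    exact ⟨hA.exists_symm_eq_of_blocking_shift hwr hshift hblock, hwr ▸ hblock.2.1⟩
  · rintro ⟨⟨i, hi⟩, hlt⟩ hB
    exact hB w0 f0 (SMInstance.blocking_shift_of_symm_eq hne hwr hshift hi hlt)

/-- Let `B` be obtained from `A` by shifting worker `w0` up past the workers
`ws 0 >_{f0} ⋯ >_{f0} ws (k-1)` immediately above `w0` in firm `f0`'s list. Then a
matching `M` stable under `A` fails to be stable under `B` exactly when `f0` is
matched to one of the `ws i` and `w0` is matched to a firm strictly below `f0` in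
`w0`'s list. -/
theorem stmt7 (A B : SMInstance W F) (w0 : W) (f0 : F) {k : ℕ} (ws : Fin k → W)
    (hne : ∀ i, ws i ≠ w0)
    (hord : ∀ i j : Fin k, i < j → A.fr f0 (ws i) < A.fr f0 (ws j))
    (habove : ∀ i, A.fr f0 (ws i) < A.fr f0 w0)
    -- the `ws i` are exactly the workers (weakly) between `ws i` and `w0` in `f0`'s list:
    (hconsec : ∀ w' (i : Fin k), A.fr f0 (ws i) ≤ A.fr f0 w' → A.fr f0 w' ≤ A.fr f0 w0 →
      (w' = w0 ∨ ∃ j, w' = ws j))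
    (hwr : B.wr = A.wr) (hfr : ∀ f, f ≠ f0 → B.fr f = A.fr f)
    (hsame : ∀ w1 w2, w1 ≠ w0 → w2 ≠ w0 →
      (B.fr f0 w1 < B.fr f0 w2 ↔ A.fr f0 w1 < A.fr f0 w2))
    -- in `B`, the workers above `w0` are exactly those above `w0` in `A` minus the `ws i`:
    (hshift : ∀ w', B.fr f0 w' < B.fr f0 w0 ↔
      (A.fr f0 w' < A.fr f0 w0 ∧ ∀ i, w' ≠ ws i)) :
    ∀ M : W ≃ F, A.Stable M →
      (¬ B.Stable M ↔ ((∃ i, M.symm f0 = ws i) ∧ A.wr w0 f0 < A.wr w0 (M w0))) :=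
  stmt7_general A B w0 f0 ws hne hwr hfr hsame hshift
end

section
/- Let A and B be stable matching instances on the same workers and firms such that at most one worker w1 has a different preference list in B, while the firms' preference lists may differ arbitrarily. Then for any two matchings M1, M2 stable under both A and B, M1 ∨_A M2 = M1 ∨_B M2 and M1 ∧_A M2 = M1 ∧_B M2; consequently M_A ∩ M_B is a sublattice of both L_A and L_B. -/
variable {W F : Type}

section Aux

variable {W F : Type}

lemma worse_spec (A : SMInstance W F) (M1 M2 : W ≃ F) (w : W) :
    (worse A M1 M2 w = M1 w ∨ worse A M1 M2 w = M2 w) ∧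
    A.wr w (M1 w) ≤ A.wr w (worse A M1 M2 w) ∧
    A.wr w (M2 w) ≤ A.wr w (worse A M1 M2 w) := by
  unfold worse
  split
  · exact ⟨Or.inr rfl, by assumption, le_refl _⟩
  · exact ⟨Or.inl rfl, le_refl _, le_of_lt (by omega)⟩

lemma better_spec (A : SMInstance W F) (M1 M2 : W ≃ F) (w : W) :
    (better A M1 M2 w = M1 w ∨ better A M1 M2 w = M2 w) ∧
    A.wr w (better A M1 M2 w) ≤ A.wr w (M1 w) ∧
    A.wr w (better A M1 M2 w) ≤ A.wr w (M2 w) := by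
  unfold better
  split
  · exact ⟨Or.inl rfl, le_refl _, by assumption⟩
  · exact ⟨Or.inr rfl, le_of_lt (by omega), le_refl _⟩

lemma worse_comm (A : SMInstance W F) (M1 M2 : W ≃ F) (w : W) :
    worse A M1 M2 w = worse A M2 M1 w := by
  unfold worse
  split <;> split
  · exact (A.wr_inj w (le_antisymm (by assumption) (by assumption))).symm
  · rfl
  · rfl
  · omega

/-- Decomposition: in the join, each firm gets its weakly more preferred partner. -/
lemma join_pref1 (A : SMInstance W F) (M1 M2 Mj : W ≃ F)
    (h2 : A.Stable M2) (hj : ∀ w, Mj w = worse A M1 M2 w) (f : F) :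
    A.fr f (Mj.symm f) ≤ A.fr f (M1.symm f) := by
  by_cases h : M1.symm f = Mj.symm f
  · rw [h]
  have hf1 : M1 (M1.symm f) = f := M1.apply_symm_apply f
  have hjw' : Mj (Mj.symm f) = f := Mj.apply_symm_apply f
  have hjne : Mj (M1.symm f) ≠ f := fun he => h (Mj.injective (he.trans hjw'.symm))
  have hcase := (worse_spec A M1 M2 (Mj.symm f)).1
  rw [← hj (Mj.symm f), hjw'] at hcase
  rcases hcase with hc | hc
  · exact absurd (M1.symm_apply_eq.mpr hc) h
  · have hw'eq : M2.symm f = Mj.symm f := by exact M2.symm_apply_eq.mpr hc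
    have hs := worse_spec A M1 M2 (M1.symm f)
    rcases hs.1 with hd | hd
    · rw [← hj (M1.symm f)] at hd
      exact absurd (hd.trans hf1) hjne
    · have hle : A.wr (M1.symm f) f ≤ A.wr (M1.symm f) (M2 (M1.symm f)) := by
        have := hs.2.1
        rw [hd, hf1] at this
        exact this
      have hne2 : M2 (M1.symm f) ≠ f := by
        intro he
        apply hjne
        rw [hj (M1.symm f), hd, he]
      have hlt : A.wr (M1.symm f) f < A.wr (M1.symm f) (M2 (M1.symm f)) :=
        lt_of_le_of_ne hle (fun he => hne2 ((A.wr_inj (M1.symm f)) he.symm))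
      by_contra hcon
      push_neg at hcon
      exact h2 (M1.symm f) f ⟨hne2, hlt, by rw [hw'eq]; exact hcon⟩

lemma join_pref (A : SMInstance W F) (M1 M2 Mj : W ≃ F)
    (h1 : A.Stable M1) (h2 : A.Stable M2) (hj : ∀ w, Mj w = worse A M1 M2 w) (f : F) :
    A.fr f (Mj.symm f) ≤ A.fr f (M1.symm f) ∧ A.fr f (Mj.symm f) ≤ A.fr f (M2.symm f) := by
  refine ⟨join_pref1 A M1 M2 Mj h2 hj f, join_pref1 A M2 M1 Mj h1 ?_ f⟩
  intro w
  rw [hj w, worse_comm]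

lemma join_stable (A : SMInstance W F) (M1 M2 Mj : W ≃ F)
    (h1 : A.Stable M1) (h2 : A.Stable M2) (hj : ∀ w, Mj w = worse A M1 M2 w) :
    A.Stable Mj := by
  rintro w f ⟨hne, hwf, hff⟩
  have hp := join_pref A M1 M2 Mj h1 h2 hj f
  rcases (worse_spec A M1 M2 w).1 with hc | hc <;> rw [← hj w] at hc
  · have hlt : A.wr w f < A.wr w (M1 w) := by rw [← hc]; exact hwf
    exact h1 w f ⟨fun he => by rw [he] at hlt; exact lt_irrefl _ hlt, hlt,
      lt_of_lt_of_le hff hp.1⟩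
  · have hlt : A.wr w f < A.wr w (M2 w) := by rw [← hc]; exact hwf
    exact h2 w f ⟨fun he => by rw [he] at hlt; exact lt_irrefl _ hlt, hlt,
      lt_of_lt_of_le hff hp.2⟩

lemma meet_stable (A : SMInstance W F) (M1 M2 Mm : W ≃ F)
    (h1 : A.Stable M1) (h2 : A.Stable M2) (hm : ∀ w, Mm w = better A M1 M2 w) :
    A.Stable Mm := by
  rintro w f ⟨hne, hwf, hff⟩
  have hmw' : Mm (Mm.symm f) = f := Mm.apply_symm_apply f
  have hcase := (better_spec A M1 M2 (Mm.symm f)).1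
  rw [← hm (Mm.symm f), hmw'] at hcase
  have hs := (better_spec A M1 M2 w)
  rcases hcase with hc | hc
  · have hsymm : M1.symm f = Mm.symm f := by exact M1.symm_apply_eq.mpr hc
    have hlt : A.wr w f < A.wr w (M1 w) := lt_of_lt_of_le hwf (by rw [hm w]; exact hs.2.1)
    exact h1 w f ⟨fun he => by rw [he] at hlt; exact lt_irrefl _ hlt, hlt,
      by rw [hsymm]; exact hff⟩
  · have hsymm : M2.symm f = Mm.symm f := by exact M2.symm_apply_eq.mpr hc
    have hlt : A.wr w f < A.wr w (M2 w) := lt_of_lt_of_le hwf (by rw [hm w]; exact hs.2.2)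
    exact h2 w f ⟨fun he => by rw [he] at hlt; exact lt_irrefl _ hlt, hlt,
      by rw [hsymm]; exact hff⟩

lemma eq_of_agree_off (M N : W ≃ F) (w1 : W) (h : ∀ w, w ≠ w1 → M w = N w) : M = N := by
  apply Equiv.ext
  intro w
  by_cases hw : w = w1
  · subst hw
    by_cases hw' : N.symm (M w) = w
    · have hx : N (N.symm (M w)) = M w := N.apply_symm_apply _
      rw [hw'] at hx
      exact hx.symm
    · exfalso
      apply hw'
      apply M.injective
      rw [h _ hw', N.apply_symm_apply]
  · exact h w hw

end Aux
/-- If at most one worker `w1` has a different preference list in `B` (firms may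
differ arbitrarily), then for any two matchings `M1, M2` stable under both `A` and
`B`, the joins w.r.t. `A` and `B` coincide (and similarly for meets), and the
resulting matchings are stable under both instances; hence `M_A ∩ M_B` is a
sublattice of both `L_A` and `L_B`. -/
theorem stmt9 (A B : SMInstance W F) (w1 : W) (hW : ∀ w, w ≠ w1 → A.wr w = B.wr w)
    (M1 M2 : W ≃ F)
    (h1A : A.Stable M1) (h1B : B.Stable M1)
    (h2A : A.Stable M2) (h2B : B.Stable M2) :
    (∀ MjA MjB : W ≃ F, (∀ w, MjA w = worse A M1 M2 w) → (∀ w, MjB w = worse B M1 M2 w) →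
      MjA = MjB ∧ A.Stable MjA ∧ B.Stable MjA) ∧
    (∀ MmA MmB : W ≃ F, (∀ w, MmA w = better A M1 M2 w) → (∀ w, MmB w = better B M1 M2 w) →
      MmA = MmB ∧ A.Stable MmA ∧ B.Stable MmA) := by
  constructor
  · intro MjA MjB hjA hjB
    have heq : MjA = MjB := by
      apply eq_of_agree_off MjA MjB w1
      intro w hw
      rw [hjA w, hjB w]
      unfold worse
      rw [hW w hw]
    refine ⟨heq, join_stable A M1 M2 MjA h1A h2A hjA, ?_⟩
    rw [heq]
    exact join_stable B M1 M2 MjB h1B h2B hjB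
  · intro MmA MmB hmA hmB
    have heq : MmA = MmB := by
      apply eq_of_agree_off MmA MmB w1
      intro w hw
      rw [hmA w, hmB w]
      unfold better
      rw [hW w hw]
    refine ⟨heq, meet_stable A M1 M2 MmA h1A h2A hmA, ?_⟩
    rw [heq]
    exact meet_stable B M1 M2 MmB h1B h2B hmB
end

section
/- In the worker-proposing Deferred Acceptance algorithm run on a single instance A, if firm f ever rejects worker w during the execution, then w and f are not matched in any stable matching of A. -/
variable {W F : Type}

namespace SMInstance

variable {A : SMInstance W F} {M : W ≃ F}

theorem Stable.wr_lt_of_fr_lt (hM : A.Stable M) {w w' : W} {f : F} (hMw : M w = f)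
    (hfr : A.fr f w' < A.fr f w) : A.wr w' (M w') < A.wr w' f := by
  have hne : M w' ≠ f := fun h => hfr.ne (by rw [M.injective (h.trans hMw.symm)])
  have hle : A.wr w' (M w') ≤ A.wr w' f := by
    by_contra! hlt
    exact hM w' f ⟨hne, hlt, M.symm_apply_eq.mpr hMw.symm ▸ hfr⟩
  exact hle.lt_of_ne fun h => hne (A.wr_inj w' h)

end SMInstance

/-- In the (round-based) worker-proposing Deferred Acceptance algorithm on instance
`A` — modelled by any execution trace where `crossed t w` is the set of firms `w`
has crossed off before round `t`, and `prop t w` is the firm `w` proposes to in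
round `t` (its most preferred uncrossed firm), with a firm rejecting a proposer
exactly when it receives a proposal from a strictly better worker — if `f` ever
rejects `w` (i.e. `f ∈ crossed t w` for some `t`), then `w` and `f` are not matched
in any stable matching of `A`. -/
theorem stmt15 (A : SMInstance W F)
    (crossed : ℕ → W → Set F) (prop : ℕ → W → F)
    (h0 : ∀ w, crossed 0 w = ∅)
    (hbest : ∀ t w, prop t w ∉ crossed t w ∧
      ∀ f, f ∉ crossed t w → A.wr w (prop t w) ≤ A.wr w f)
    (hstep : ∀ t w, crossed (t + 1) w = crossed t w ∪
      {f | prop t w = f ∧ ∃ w', prop t w' = f ∧ A.fr f w' < A.fr f w}) :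
    ∀ t w f, f ∈ crossed t w → ∀ M : W ≃ F, A.Stable M → M w ≠ f := by
  intro t
  induction t with
  | zero => simp [h0]
  | succ t ih =>
    intro w f hf M hM hMw
    rw [hstep] at hf
    rcases hf with hf | ⟨-, w', rfl, hfr⟩
    · exact ih w _ hf M hM hMw
    · have hpartner : M w' ∉ crossed t w' := fun hc => ih w' _ hc M hM rfl
      have hprefers : A.wr w' (prop t w') ≤ A.wr w' (M w') := (hbest t w').2 _ hpartner
      exact (hM.wr_lt_of_fr_lt hMw hfr).not_ge hprefers
end

section
/- Consider the two-room worker-proposing Deferred Acceptance algorithm for instances A and B where all workers except w1 have identical lists in A and B: workers propose in both rooms according to the room's instance, each worker maintains a single crossed-off set updated by rejections from either room. If the algorithm terminates with perfect matchings μ_A in room A and μ_B in room B, then μ_A = μ_B. -/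
variable {W F : Type}

/-!
In every round each worker proposes, in each room, to its best firm outside its crossed-off
set. The crossed-off set is shared by the two rooms, so a worker `w ≠ w1`, whose list is the
same in both rooms, proposes to the same firm in both, i.e. `μA w = μB w`. Two perfect
matchings that agree on all workers but one agree on that one too.
-/

theorem Function.Injective.eq_of_isMinOn {α β : Type*} [PartialOrder β] {r : α → β}
    (hr : Function.Injective r) {s : Set α} {x y : α} (hx : x ∈ s) (hy : y ∈ s)
    (hxmin : IsMinOn r s x) (hymin : IsMinOn r s y) : x = y :=
  hr (le_antisymm (isMinOn_iff.1 hxmin y hy) (isMinOn_iff.1 hymin x hx))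

theorem Function.Injective.eq_of_surjective_of_forall_ne {α β : Type*} {f g : α → β}
    (hf : Function.Injective f) (hg : Function.Surjective g) {a₀ : α}
    (h : ∀ a, a ≠ a₀ → f a = g a) : f = g := by
  funext a
  by_cases ha : a = a₀
  · subst ha
    obtain ⟨b, hb⟩ := hg (f a)
    have hba : b = a := by
      by_contra hne
      exact hne (hf ((h b hne).trans hb))
    rw [← hb, hba]
  · exact h a ha

theorem stmt16_general (A B : SMInstance W F) (w1 : W)
    (hW : ∀ w, w ≠ w1 → A.wr w = B.wr w)
    (crossed : ℕ → W → Set F) (propA propB : ℕ → W → F)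
    (hbestA : ∀ t w, propA t w ∉ crossed t w ∧
      ∀ f, f ∉ crossed t w → A.wr w (propA t w) ≤ A.wr w f)
    (hbestB : ∀ t w, propB t w ∉ crossed t w ∧
      ∀ f, f ∉ crossed t w → B.wr w (propB t w) ≤ B.wr w f)
    (T : ℕ)
    (μA μB : W ≃ F) (hμA : ∀ w, μA w = propA T w) (hμB : ∀ w, μB w = propB T w) :
    μA = μB := by
  have hagree : ∀ w, w ≠ w1 → μA w = μB w := by
    intro w hw
    have hminA : IsMinOn (A.wr w) (crossed T w)ᶜ (propA T w) := isMinOn_iff.2 (hbestA T w).2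
    have hminB : IsMinOn (A.wr w) (crossed T w)ᶜ (propB T w) := by
      rw [hW w hw]
      exact isMinOn_iff.2 (hbestB T w).2
    rw [hμA, hμB]
    exact (A.wr_inj w).eq_of_isMinOn (hbestA T w).1 (hbestB T w).1 hminA hminB
  exact DFunLike.coe_injective (μA.injective.eq_of_surjective_of_forall_ne μB.surjective hagree)

/-- The two-room worker-proposing Deferred Acceptance algorithm for instances `A`
and `B`, where all workers except `w1` have identical lists in `A` and `B`: each
worker maintains one crossed-off set (shared across rooms, updated by rejections
from either room) and proposes in each room to its best uncrossed firm for that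
room's instance.  If the algorithm terminates at round `T` (no rejections) with
perfect matchings `μA` in room `A` and `μB` in room `B`, then `μA = μB`. -/
theorem stmt16 (A B : SMInstance W F) (w1 : W)
    (hW : ∀ w, w ≠ w1 → A.wr w = B.wr w)
    (crossed : ℕ → W → Set F) (propA propB : ℕ → W → F)
    (h0 : ∀ w, crossed 0 w = ∅)
    (hbestA : ∀ t w, propA t w ∉ crossed t w ∧
      ∀ f, f ∉ crossed t w → A.wr w (propA t w) ≤ A.wr w f)
    (hbestB : ∀ t w, propB t w ∉ crossed t w ∧
      ∀ f, f ∉ crossed t w → B.wr w (propB t w) ≤ B.wr w f)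
    (hstep : ∀ t w, crossed (t + 1) w = crossed t w ∪
      ({f | propA t w = f ∧ ∃ w', propA t w' = f ∧ A.fr f w' < A.fr f w} ∪
       {f | propB t w = f ∧ ∃ w', propB t w' = f ∧ B.fr f w' < B.fr f w}))
    (T : ℕ) (hstop : ∀ w, crossed (T + 1) w = crossed T w)
    (μA μB : W ≃ F) (hμA : ∀ w, μA w = propA T w) (hμB : ∀ w, μB w = propB T w) :
    μA = μB :=
  stmt16_general A B w1 hW crossed propA propB hbestA hbestB T μA μB hμA hμB
end
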